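/- Let ⟨K,B,P,N⟩_R be a DPI, D a set of minimal diagnoses w.r.t. it, and P_k = ⟨dx_k, dnx_k, ∅⟩ a q-partition w.r.t. D (i.e., the q-partition of some query w.r.t. D). Then for every Q ⊆ Disc_D: Q is a ⊆-minimal query w.r.t. D with q-partition P_k (that is, a query with q-partition P_k such that no proper subset of Q is a query with q-partition P_k) if and only if Q ∈ MHS(Tr(P_k)), the set of minimal hitting sets of the collection of traits of the diagnoses in dnx_k. -/

import Mathlib

/-! For minimal diagnoses `D_i` and `X ⊆ K`, the q-partition of `X` is read off from
intersections: `D_i ∈ dx(X)` iff `X ∩ D_i = ∅`, and otherwise `D_i ∈ dnx(X)`, because for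
`α ∈ X ∩ D_i` the set `D_i \ {α}` is not a diagnosis, so `K*_i ∪ {α} ⊆ K*_i ∪ X` already
violates. Hence `X ⊆ Disc_D` has q-partition `P_k` iff it misses every diagnosis of `dx_k` and
meets every one of `dnx_k`; since each element of `X` lies in some diagnosis, which must then be
in `dnx_k`, this says precisely that `X` is a hitting set of the traits `Tr(P_k)`, and
⊆-minimality transfers. -/

namespace KBDDiag

/-- A diagnosis problem instance (DPI) `⟨K,B,P,N⟩_R` over a Tarskian logic on sentences `L`. -/
structure DPI (L : Type*) where
  /-- the entailment relation of the logic -/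
  entails : Set L → L → Prop
  /-- entailment is monotonic -/
  entails_mono : ∀ (X Y : Set L) (α : L), entails X α → entails (X ∪ Y) α
  /-- entailment is idempotent -/
  entails_idem : ∀ (X A : Set L) (β : L),
    (∀ α ∈ A, entails X α) → entails (X ∪ A) β → entails X β
  /-- entailment is extensive -/
  entails_ext : ∀ (X : Set L) (α : L), α ∈ X → entails X α
  /-- the (possibly faulty) KB -/
  K : Set L
  /-- the background KB -/
  B : Set L
  /-- the positive test cases -/
  P : Set (Set L)
  /-- the negative test cases -/
  N : Set (Set L)
  /-- requirements: `r X` means the KB `X` satisfies requirement `r` -/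
  R : Set (Set L → Prop)
  K_finite : K.Finite
  B_finite : B.Finite
  K_B_disjoint : K ∩ B = ∅
  P_finite : P.Finite
  P_mem_finite : ∀ p ∈ P, Set.Finite p
  N_finite : N.Finite
  N_mem_finite : ∀ n ∈ N, Set.Finite n
  /-- violation of a requirement is monotone -/
  viol_mono : ∀ r ∈ R, ∀ X Y : Set L, X ⊆ Y → ¬ r X → ¬ r Y
  /-- requirements are preserved under adding entailed sentences -/
  sat_entailed : ∀ r ∈ R, ∀ X A : Set L, r X → (∀ α ∈ A, entails X α) → r (X ∪ A)
  /-- the background KB satisfies every requirement -/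
  B_sat : ∀ r ∈ R, r B

namespace DPI

variable {L : Type*} (d : DPI L)

/-- `X ⊨ Y` : X entails every sentence of Y. -/
def EntailsAll (X Y : Set L) : Prop := ∀ α ∈ Y, d.entails X α

/-- `U_P`, the union of all positive test cases. -/
def UP : Set L := ⋃₀ d.P

/-- `Ks` is a solution KB w.r.t. the DPI. -/
def IsSolutionKB (Ks : Set L) : Prop :=
  (∀ r ∈ d.R, r (Ks ∪ d.B)) ∧
  (∀ p ∈ d.P, d.EntailsAll (Ks ∪ d.B) p) ∧
  (∀ n ∈ d.N, ¬ d.EntailsAll (Ks ∪ d.B) n)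

/-- `D` is a diagnosis w.r.t. the DPI. -/
def IsDiagnosis (D : Set L) : Prop :=
  D ⊆ d.K ∧ d.IsSolutionKB ((d.K \ D) ∪ d.UP)

/-- `D` is a minimal diagnosis w.r.t. the DPI. -/
def IsMinDiagnosis (D : Set L) : Prop :=
  d.IsDiagnosis D ∧ ∀ D' ⊂ D, ¬ d.IsDiagnosis D'

/-- `C` is a conflict w.r.t. the DPI. -/
def IsConflict (C : Set L) : Prop :=
  C ⊆ d.K ∧ ¬ d.IsSolutionKB (C ∪ d.UP)

/-- `C` is a minimal conflict w.r.t. the DPI. -/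
def IsMinConflict (C : Set L) : Prop :=
  d.IsConflict C ∧ ∀ C' ⊂ C, ¬ d.IsConflict C'

/-- `Ks` is a maximal solution KB w.r.t. the DPI. -/
def IsMaxSolutionKB (Ks : Set L) : Prop :=
  d.IsSolutionKB Ks ∧ ¬ ∃ K' : Set L, d.IsSolutionKB K' ∧ Ks ∩ d.K ⊂ K' ∩ d.K

/-- `K*_i = (K \ D_i) ∪ B ∪ U_P`. -/
def Kstar (Di : Set L) : Set L := (d.K \ Di) ∪ d.B ∪ d.UP

/-- `X` violates some requirement in `R` or entails some negative test case. -/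
def Violates (X : Set L) : Prop :=
  (∃ r ∈ d.R, ¬ r X) ∨ (∃ n ∈ d.N, d.EntailsAll X n)

/-- `dx(X)` w.r.t. the leading diagnoses `Ds`. -/
def dxS (Ds : Set (Set L)) (X : Set L) : Set (Set L) :=
  {Di ∈ Ds | d.EntailsAll (d.Kstar Di) X}

/-- `dnx(X)` w.r.t. the leading diagnoses `Ds`. -/
def dnxS (Ds : Set (Set L)) (X : Set L) : Set (Set L) :=
  {Di ∈ Ds | d.Violates (d.Kstar Di ∪ X)}

/-- `dz(X)` w.r.t. the leading diagnoses `Ds`. -/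
def dzS (Ds : Set (Set L)) (X : Set L) : Set (Set L) :=
  Ds \ (d.dxS Ds X ∪ d.dnxS Ds X)

/-- `Q` is a query w.r.t. the leading diagnoses `Ds`. -/
def IsQuery (Ds : Set (Set L)) (Q : Set L) : Prop :=
  Q.Nonempty ∧ (d.dxS Ds Q).Nonempty ∧ (d.dnxS Ds Q).Nonempty

/-- The canonical query `Q_can(S) = (K \ U_S) ∩ (U_D \ I_D)` w.r.t. the seed `S`. -/
def Qcan (Ds S : Set (Set L)) : Set L := (d.K \ ⋃₀ S) ∩ (⋃₀ Ds \ ⋂₀ Ds)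

/-- `⟨dxp, dnxp, ∅⟩` is a canonical q-partition of `Ds`. -/
def IsCanonicalQPartition (Ds dxp dnxp : Set (Set L)) : Prop :=
  dxp ∪ dnxp = Ds ∧ dxp ∩ dnxp = ∅ ∧
  dxp.Nonempty ∧ dxp ⊂ Ds ∧
  (d.Qcan Ds dxp).Nonempty ∧
  d.dxS Ds (d.Qcan Ds dxp) = dxp ∧
  d.dnxS Ds (d.Qcan Ds dxp) = dnxp ∧
  d.dzS Ds (d.Qcan Ds dxp) = ∅

end DPI

/-- `Disc_D = U_D \ I_D`, the discrimination sentences w.r.t. `Ds`. -/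
def Disc {L : Type*} (Ds : Set (Set L)) : Set L := ⋃₀ Ds \ ⋂₀ Ds

/-- `H` is a hitting set of the collection `S`. -/
def IsHittingSet {α : Type*} (S : Set (Set α)) (H : Set α) : Prop :=
  H ⊆ ⋃₀ S ∧ ∀ s ∈ S, (H ∩ s).Nonempty

/-- `H` is a minimal hitting set of the collection `S`. -/
def IsMinHittingSet {α : Type*} (S : Set (Set α)) (H : Set α) : Prop :=
  IsHittingSet S H ∧ ∀ H' ⊂ H, ¬ IsHittingSet S H'

/-- `MHS S`, the set of all minimal hitting sets of `S`. -/
def MHS {α : Type*} (S : Set (Set α)) : Set (Set α) :=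
  {H | IsMinHittingSet S H}

theorem and_forall_ssubset_not_congr {α : Type*} {p q : Set α → Prop} {S Q : Set α}
    (hpq : ∀ X ⊆ S, (p X ↔ q X)) (hQ : Q ⊆ S) :
    (p Q ∧ ∀ Q' ⊂ Q, ¬ p Q') ↔ (q Q ∧ ∀ Q' ⊂ Q, ¬ q Q') :=
  and_congr (hpq Q hQ) (forall₂_congr fun Q' hQ' => not_congr (hpq Q' (hQ'.subset.trans hQ)))

theorem isHittingSet_image_sdiff_sUnion_iff {α : Type*} {Ds dx dnx : Set (Set α)} {X : Set α}
    (hcover : Ds ⊆ dx ∪ dnx) (hX : X ⊆ ⋃₀ Ds) :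
    IsHittingSet ((· \ ⋃₀ dx) '' dnx) X ↔
      (∀ Di ∈ dx, Disjoint X Di) ∧ ∀ Di ∈ dnx, ¬ Disjoint X Di := by
  constructor
  · rintro ⟨hsub, hhit⟩
    have hXdx : Disjoint X (⋃₀ dx) := by
      refine Set.disjoint_left.2 fun x hx => ?_
      obtain ⟨_, ⟨Di, -, rfl⟩, hxDi⟩ := hsub hx
      exact hxDi.2
    refine ⟨fun Di hDi => hXdx.mono_right (Set.subset_sUnion_of_mem hDi), fun Di hDi => ?_⟩
    obtain ⟨x, hxX, hxDi, -⟩ := hhit _ ⟨Di, hDi, rfl⟩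
    exact Set.not_disjoint_iff.2 ⟨x, hxX, hxDi⟩
  · rintro ⟨hdx, hdnx⟩
    have hXdx : Disjoint X (⋃₀ dx) := Set.disjoint_sUnion_right.2 hdx
    refine ⟨fun x hx => ?_, ?_⟩
    · obtain ⟨Di, hDi, hxDi⟩ := hX hx
      have hDi' : Di ∈ dnx :=
        (hcover hDi).resolve_left fun h => (hdx Di h).notMem_of_mem_left hx hxDi
      exact ⟨_, ⟨Di, hDi', rfl⟩, hxDi, hXdx.notMem_of_mem_left hx⟩
    · rintro _ ⟨Di, hDi, rfl⟩
      obtain ⟨x, hxX, hxDi⟩ := Set.not_disjoint_iff.1 (hdnx Di hDi)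
      exact ⟨x, hxX, hxDi, hXdx.notMem_of_mem_left hxX⟩

namespace DPI

variable {L : Type*} (d : DPI L)

theorem entails_of_subset {X Y : Set L} (hXY : X ⊆ Y) {α : L} (h : d.entails X α) :
    d.entails Y α := by
  simpa only [Set.union_eq_self_of_subset_left hXY] using d.entails_mono X Y α h

theorem Violates.mono {X Y : Set L} (hXY : X ⊆ Y) (h : d.Violates X) : d.Violates Y := by
  rcases h with ⟨r, hr, hrX⟩ | ⟨n, hn, hnX⟩
  · exact Or.inl ⟨r, hr, d.viol_mono r hr X Y hXY hrX⟩
  · exact Or.inr ⟨n, hn, fun α hα => d.entails_of_subset hXY (hnX α hα)⟩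

theorem not_violates_union_of_entailsAll {X A : Set L} (hX : ¬ d.Violates X)
    (hXA : d.EntailsAll X A) : ¬ d.Violates (X ∪ A) := by
  rintro (⟨r, hr, hrXA⟩ | ⟨n, hn, hnXA⟩)
  · refine hX (Or.inl ⟨r, hr, fun hrX => hrXA ?_⟩)
    exact d.sat_entailed r hr X A hrX hXA
  · exact hX (Or.inr ⟨n, hn, fun β hβ => d.entails_idem X A β hXA (hnXA β hβ)⟩)

theorem isSolutionKB_iff_not_violates {Ks : Set L} (hUP : d.UP ⊆ Ks) :
    d.IsSolutionKB Ks ↔ ¬ d.Violates (Ks ∪ d.B) := by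
  have hP : ∀ p ∈ d.P, d.EntailsAll (Ks ∪ d.B) p := fun p hp α hα =>
    d.entails_ext _ α (Or.inl (hUP ⟨p, hp, hα⟩))
  simp only [IsSolutionKB, Violates, not_or, not_exists, not_and, not_not]
  exact ⟨fun h => ⟨h.1, h.2.2⟩, fun h => ⟨h.1, hP, h.2⟩⟩

theorem kstar_eq (Di : Set L) : d.Kstar Di = (d.K \ Di) ∪ d.UP ∪ d.B :=
  Set.union_right_comm _ _ _

theorem isDiagnosis_iff {D : Set L} : d.IsDiagnosis D ↔ D ⊆ d.K ∧ ¬ d.Violates (d.Kstar D) := by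
  rw [IsDiagnosis, kstar_eq, isSolutionKB_iff_not_violates d Set.subset_union_right]

theorem notMem_dnxS_of_mem_dxS {Ds : Set (Set L)} {X Di : Set L} (hDi : d.IsDiagnosis Di)
    (hx : Di ∈ d.dxS Ds X) : Di ∉ d.dnxS Ds X := fun hnx =>
  d.not_violates_union_of_entailsAll ((d.isDiagnosis_iff.1 hDi).2) hx.2 hnx.2

theorem mem_dxS_of_disjoint {Ds : Set (Set L)} {X Di : Set L} (hXK : X ⊆ d.K) (hDi : Di ∈ Ds)
    (hXDi : Disjoint X Di) : Di ∈ d.dxS Ds X :=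
  ⟨hDi, fun α hα => d.entails_ext _ α (Or.inl (Or.inl ⟨hXK hα, hXDi.notMem_of_mem_left hα⟩))⟩

theorem mem_dnxS_of_not_disjoint {Ds : Set (Set L)} {X Di : Set L} (hDi : Di ∈ Ds)
    (hmin : d.IsMinDiagnosis Di) (hXDi : ¬ Disjoint X Di) : Di ∈ d.dnxS Ds X := by
  obtain ⟨α, hαX, hαDi⟩ := Set.not_disjoint_iff.1 hXDi
  have hα : ¬ d.IsDiagnosis (Di \ {α}) :=
    hmin.2 _ (Set.sdiff_singleton_ssubset.2 hαDi)
  rw [isDiagnosis_iff, not_and_not_right] at hα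
  have hviol := hα (Set.sdiff_subset.trans hmin.1.1)
  refine ⟨hDi, hviol.mono d ?_⟩
  intro x hx
  simp only [kstar_eq, Set.mem_union, Set.mem_sdiff, Set.mem_singleton_iff] at hx ⊢
  by_cases hxα : x = α
  · exact Or.inr (hxα ▸ hαX)
  · tauto

section LeadingDiagnoses

variable {d} {Ds : Set (Set L)}

theorem dxS_eq (hDs : ∀ Di ∈ Ds, d.IsMinDiagnosis Di) {X : Set L} (hXK : X ⊆ d.K) :
    d.dxS Ds X = {Di ∈ Ds | Disjoint X Di} := by
  ext Di
  refine ⟨fun hx => ⟨hx.1, ?_⟩, fun ⟨hDi, hXDi⟩ => d.mem_dxS_of_disjoint hXK hDi hXDi⟩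
  by_contra hXDi
  exact d.notMem_dnxS_of_mem_dxS (hDs Di hx.1).1 hx
    (d.mem_dnxS_of_not_disjoint hx.1 (hDs Di hx.1) hXDi)

theorem dnxS_eq (hDs : ∀ Di ∈ Ds, d.IsMinDiagnosis Di) {X : Set L} (hXK : X ⊆ d.K) :
    d.dnxS Ds X = {Di ∈ Ds | ¬ Disjoint X Di} := by
  ext Di
  refine ⟨fun hnx => ⟨hnx.1, fun hXDi => ?_⟩,
    fun ⟨hDi, hXDi⟩ => d.mem_dnxS_of_not_disjoint hDi (hDs Di hDi) hXDi⟩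
  exact d.notMem_dnxS_of_mem_dxS (hDs Di hnx.1).1 (d.mem_dxS_of_disjoint hXK hnx.1 hXDi) hnx

theorem dzS_eq_empty (hDs : ∀ Di ∈ Ds, d.IsMinDiagnosis Di) {X : Set L} (hXK : X ⊆ d.K) :
    d.dzS Ds X = ∅ := by
  rw [dzS, dxS_eq hDs hXK, dnxS_eq hDs hXK, Set.sdiff_eq_empty]
  intro Di hDi
  by_cases hXDi : Disjoint X Di
  exacts [Or.inl ⟨hDi, hXDi⟩, Or.inr ⟨hDi, hXDi⟩]

theorem dxS_union_dnxS_eq_of_dzS_eq_empty {X : Set L} (hX : d.dzS Ds X = ∅) :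
    d.dxS Ds X ∪ d.dnxS Ds X = Ds :=
  (Set.union_subset (Set.sep_subset _ _) (Set.sep_subset _ _)).antisymm (Set.sdiff_eq_empty.1 hX)

variable (d) in
def HasQPartition (Ds : Set (Set L)) (X : Set L) (dx dnx : Set (Set L)) : Prop :=
  d.IsQuery Ds X ∧ d.dxS Ds X = dx ∧ d.dnxS Ds X = dnx ∧ d.dzS Ds X = ∅

theorem hasQPartition_iff (hDs : ∀ Di ∈ Ds, d.IsMinDiagnosis Di) {X : Set L} (hXK : X ⊆ d.K)
    {dx dnx : Set (Set L)} (hcover : dx ∪ dnx = Ds) (hdx : dx.Nonempty) (hdnx : dnx.Nonempty) :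
    d.HasQPartition Ds X dx dnx ↔ (∀ Di ∈ dx, Disjoint X Di) ∧ ∀ Di ∈ dnx, ¬ Disjoint X Di := by
  rw [HasQPartition, IsQuery, dzS_eq_empty hDs hXK, dxS_eq hDs hXK, dnxS_eq hDs hXK]
  constructor
  · rintro ⟨-, hx, hnx, -⟩
    exact ⟨fun Di hDi => ((Set.ext_iff.1 hx Di).2 hDi).2,
      fun Di hDi => ((Set.ext_iff.1 hnx Di).2 hDi).2⟩
  · rintro ⟨hdxX, hdnxX⟩
    have hx : {Di ∈ Ds | Disjoint X Di} = dx := by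
      ext Di
      refine ⟨fun ⟨hDi, hXDi⟩ => ?_, fun hDi => ⟨hcover ▸ Or.inl hDi, hdxX Di hDi⟩⟩
      exact ((hcover ▸ hDi : Di ∈ dx ∪ dnx)).resolve_right fun h => hdnxX Di h hXDi
    have hnx : {Di ∈ Ds | ¬ Disjoint X Di} = dnx := by
      ext Di
      refine ⟨fun ⟨hDi, hXDi⟩ => ?_, fun hDi => ⟨hcover ▸ Or.inr hDi, hdnxX Di hDi⟩⟩
      exact ((hcover ▸ hDi : Di ∈ dx ∪ dnx)).resolve_left fun h => hXDi (hdxX Di h)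
    obtain ⟨Di, hDi⟩ := hdnx
    obtain ⟨x, hxX, -⟩ := Set.not_disjoint_iff.1 (hdnxX Di hDi)
    exact ⟨⟨⟨x, hxX⟩, hx ▸ hdx, hnx ▸ ⟨Di, hDi⟩⟩, hx, hnx, rfl⟩

end LeadingDiagnoses

end DPI

/-- For a q-partition `P_k = ⟨dxk, dnxk, ∅⟩` of some query w.r.t. `Ds` and any
`Q ⊆ Disc_D`: `Q` is a ⊆-minimal query with q-partition `P_k` iff `Q ∈ MHS(Tr(P_k))`. -/
theorem statement18 {L : Type*} (d : DPI L) (Ds : Set (Set L))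
    (hDs : ∀ Di ∈ Ds, d.IsMinDiagnosis Di)
    (dxk dnxk : Set (Set L))
    (hP : ∃ Q0 : Set L, d.IsQuery Ds Q0 ∧ d.dxS Ds Q0 = dxk ∧ d.dnxS Ds Q0 = dnxk ∧
      d.dzS Ds Q0 = ∅)
    (Q : Set L) (hQ : Q ⊆ Disc Ds) :
    (d.IsQuery Ds Q ∧ d.dxS Ds Q = dxk ∧ d.dnxS Ds Q = dnxk ∧ d.dzS Ds Q = ∅ ∧
      ∀ Q' ⊂ Q, ¬ (d.IsQuery Ds Q' ∧ d.dxS Ds Q' = dxk ∧ d.dnxS Ds Q' = dnxk ∧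
        d.dzS Ds Q' = ∅)) ↔
      Q ∈ MHS ((fun Di : Set L => Di \ ⋃₀ dxk) '' dnxk) := by
  obtain ⟨Q0, ⟨-, hdx, hdnx⟩, rfl, rfl, hdz⟩ := hP
  have hDiscK : Disc Ds ⊆ d.K := fun x ⟨⟨Di, hDi, hx⟩, _⟩ => (hDs Di hDi).1.1 hx
  have hcover := d.dxS_union_dnxS_eq_of_dzS_eq_empty hdz
  have key : ∀ X ⊆ Disc Ds, (d.HasQPartition Ds X (d.dxS Ds Q0) (d.dnxS Ds Q0) ↔
      IsHittingSet ((fun Di : Set L => Di \ ⋃₀ d.dxS Ds Q0) '' d.dnxS Ds Q0) X) := fun X hX =>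
    (d.hasQPartition_iff hDs (hX.trans hDiscK) hcover hdx hdnx).trans
      (isHittingSet_image_sdiff_sUnion_iff hcover.ge (hX.trans Set.sdiff_subset)).symm
  have := and_forall_ssubset_not_congr key hQ
  simp only [DPI.HasQPartition, and_assoc] at this
  exact this

end KBDDiag
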